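/- arXiv:1609.01928 — 2 statements merged into one kernel-verified Lean document; each statement's English description precedes it below -/
import Mathlib

section
/- Let m > g-1 be an odd number not divisible by g-1. If some c with 2 ≤ c ≤ g-1, or some c ≡ -j (mod m) with 1 ≤ j ≤ g-2, belongs to the subgroup of (Z/mZ)^× generated by g, then m is complete (has no non-trivial extreme cycle for the digit set {0,m}). -/
/-- A cycle for the digit set `{0, m}` with scale `g`: integers `x i`, digits `l i ∈ {0, m}`,
satisfying `x (i+1) = (x i + l i) / g` cyclically. -/
def IsCycle (g m : ℕ) (r : ℕ) (x l : ZMod r → ℤ) : Prop :=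
  0 < r ∧ (∀ i, l i = 0 ∨ l i = (m : ℤ)) ∧ (∀ i, (g : ℤ) * x (i + 1) = x i + l i)

/-- A non-trivial extreme cycle: a cycle whose digits are not all zero. -/
def IsNontrivialCycle (g m : ℕ) (r : ℕ) (x l : ZMod r → ℤ) : Prop :=
  IsCycle g m r x l ∧ ∃ i, l i ≠ 0

/-- `m` is incomplete if there exists a non-trivial extreme cycle for `{0, m}`. -/
def Incomplete (g m : ℕ) : Prop :=
  ∃ (r : ℕ) (x l : ZMod r → ℤ), IsNontrivialCycle g m r x l

/-- `m` is complete if the only extreme cycle for `{0, m}` is the trivial one. -/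
def Complete (g m : ℕ) : Prop := ¬ Incomplete g m

/-- `m` is primitive if it is incomplete and all proper divisors of `m` are complete. -/
def Primitive (g m : ℕ) : Prop :=
  Incomplete g m ∧ ∀ d : ℕ, d ∣ m → d ≠ m → Complete g d

/-!
Along a cycle, `g * x (i + 1) ≡ x i (mod m)`, so going `k` steps backwards multiplies a cycle
point by `g ^ k` modulo `m`. All cycle points lie in `[0, m / (g - 1))`, and the largest one `X`
is positive. If `c ≡ g ^ k`, some cycle point `Y ≤ X` is congruent to `c * X`. For
`2 ≤ c ≤ g - 1` this forces `Y = c * X > X`; for `c = -j` with `1 ≤ j ≤ g - 2` it forces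
`Y = m - j * X ≥ m / (g - 1)`. Both contradict the bounds.
-/

lemma eq_of_intCast_eq_of_nonneg_of_lt {m : ℕ} {a b : ℤ} (h : (a : ZMod m) = b)
    (ha : 0 ≤ a) (ham : a < m) (hb : 0 ≤ b) (hbm : b < m) : a = b := by
  rwa [ZMod.intCast_eq_intCast_iff', Int.emod_eq_of_lt ha ham, Int.emod_eq_of_lt hb hbm] at h

lemma intCast_ne_mul_of_two_le {m : ℕ} {c X Y : ℤ} (hc : 2 ≤ c) (hX : 0 < X) (hY : 0 ≤ Y)
    (hYX : Y ≤ X) (hcX : c * X < m) : (Y : ZMod m) ≠ ((c * X : ℤ) : ZMod m) := by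
  intro h
  have := eq_of_intCast_eq_of_nonneg_of_lt h hY (by nlinarith) (by positivity) hcX
  nlinarith

lemma intCast_ne_neg_mul_of_pos {m : ℕ} {j X Y : ℤ} (hj : 0 < j) (hX : 0 < X) (hY : 0 ≤ Y)
    (hjX : (j + 1) * X < m) (hjY : (j + 1) * Y < m) :
    (Y : ZMod m) ≠ ((-j * X : ℤ) : ZMod m) := by
  intro h
  have hY : Y = m - j * X := by
    refine eq_of_intCast_eq_of_nonneg_of_lt (h.trans ?_) ?_ ?_ ?_ ?_
    · simp
    all_goals nlinarith
  subst hY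
  nlinarith

namespace IsCycle

variable {g m r : ℕ} {x l : ZMod r → ℤ}

lemma digit_nonneg (hc : IsCycle g m r x l) (i : ZMod r) : 0 ≤ l i := by
  rcases hc.2.1 i with h | h <;> simp [h]

lemma digit_le (hc : IsCycle g m r x l) (i : ZMod r) : l i ≤ m := by
  rcases hc.2.1 i with h | h <;> simp [h]

lemma finite_index (hc : IsCycle g m r x l) : Finite (ZMod r) := by
  have : NeZero r := ⟨hc.1.ne'⟩
  infer_instance

lemma nonneg (hc : IsCycle g m r x l) (hg : 1 < g) (i : ZMod r) : 0 ≤ x i := by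
  have := hc.finite_index
  obtain ⟨imin, hmin⟩ := Finite.exists_min x
  have hstep := hc.2.2 (imin - 1)
  rw [sub_add_cancel] at hstep
  have hg' : (1 : ℤ) < g := by exact_mod_cast hg
  have : 0 ≤ x imin := by nlinarith [hmin (imin - 1), hc.digit_nonneg (imin - 1)]
  exact this.trans (hmin i)

lemma sub_one_mul_lt (hc : IsCycle g m r x l) (hg : 1 ≤ g) (hnd : ¬ (g - 1) ∣ m)
    (i : ZMod r) : ((g : ℤ) - 1) * x i < m := by
  have := hc.finite_index
  obtain ⟨imax, hmax⟩ := Finite.exists_max x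
  have hstep := hc.2.2 (imax - 1)
  rw [sub_add_cancel] at hstep
  have hle : ((g : ℤ) - 1) * x imax ≤ m := by
    linarith [hmax (imax - 1), hc.digit_le (imax - 1)]
  have hne : ((g : ℤ) - 1) * x imax ≠ m := by
    rintro heq
    refine hnd (Int.natCast_dvd_natCast.mp ⟨x imax, ?_⟩)
    rw [← heq, Nat.cast_sub hg, Nat.cast_one]
  have hg' : (0 : ℤ) ≤ (g : ℤ) - 1 := by
    rw [sub_nonneg]; exact_mod_cast hg
  exact (mul_le_mul_of_nonneg_left (hmax i) hg').trans_lt (lt_of_le_of_ne hle hne)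

lemma intCast_sub_natCast (hc : IsCycle g m r x l) (i : ZMod r) (k : ℕ) :
    ((x (i - k) : ℤ) : ZMod m) = (g : ZMod m) ^ k * (x i : ZMod m) := by
  induction k with
  | zero => simp
  | succ k ih =>
    have hstep := congrArg (Int.cast : ℤ → ZMod m) (hc.2.2 (i - k - 1))
    have hdigit : ((l (i - k - 1) : ℤ) : ZMod m) = 0 := by
      rcases hc.2.1 (i - k - 1) with h | h <;> simp [h]
    rw [sub_add_cancel, Int.cast_mul, Int.cast_add, hdigit, add_zero, Int.cast_natCast, ih]
      at hstep
    rw [Nat.cast_succ, ← sub_sub, ← hstep, pow_succ]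
    ring

end IsCycle

lemma IsNontrivialCycle.pos_of_forall_le {g m r : ℕ} {x l : ZMod r → ℤ}
    (hc : IsNontrivialCycle g m r x l) (hg : 1 < g) {imax : ZMod r}
    (hmax : ∀ i, x i ≤ x imax) : 0 < x imax := by
  obtain ⟨hcyc, i, hi⟩ := hc
  by_contra! hle
  have hzero : ∀ j, x j = 0 := fun j => le_antisymm ((hmax j).trans hle) (hcyc.nonneg hg j)
  have := hcyc.2.2 i
  rw [hzero, hzero, mul_zero, zero_add] at this
  exact hi this.symm

theorem stmt8_general (g m : ℕ) (hnd : ¬ (g - 1) ∣ m)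
    (h : ∃ c : ℤ, ((2 ≤ c ∧ c ≤ (g : ℤ) - 1) ∨ (1 ≤ -c ∧ -c ≤ (g : ℤ) - 2)) ∧
      ∃ j : ℕ, ((g : ZMod m)) ^ j = (c : ZMod m)) :
    Complete g m := by
  rintro ⟨r, x, l, hnt⟩
  obtain ⟨c, hc, k, hgk⟩ := h
  -- the range allowed for `c` is empty unless `3 ≤ g`
  have hg : 1 < g := by omega
  have hcyc := hnt.1
  have := hcyc.finite_index
  obtain ⟨imax, hmax⟩ := Finite.exists_max x
  have hX := hnt.pos_of_forall_le hg hmax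
  have hbound := hcyc.sub_one_mul_lt hg.le hnd
  have hY : (x (imax - k) : ZMod m) = ((c * x imax : ℤ) : ZMod m) := by
    rw [hcyc.intCast_sub_natCast, hgk, Int.cast_mul]
  rcases hc with ⟨hc2, hcg⟩ | ⟨hj1, hjg⟩
  · exact intCast_ne_mul_of_two_le hc2 hX (hcyc.nonneg hg _) (hmax _)
      (by nlinarith [hbound imax]) hY
  · refine intCast_ne_neg_mul_of_pos (m := m) (j := -c) (by omega) hX (hcyc.nonneg hg _)
      (by nlinarith [hbound imax]) (by nlinarith [hbound (imax - k), hcyc.nonneg hg (imax - k)]) ?_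
    rwa [neg_neg]

theorem stmt8 (g m : ℕ) (hg4 : 4 ≤ g) (hge : Even g) (hm : Odd m)
    (hmg : g - 1 < m) (hnd : ¬ (g - 1) ∣ m)
    (h : ∃ c : ℤ, ((2 ≤ c ∧ c ≤ (g : ℤ) - 1) ∨ (1 ≤ -c ∧ -c ≤ (g : ℤ) - 2)) ∧
      ∃ j : ℕ, ((g : ZMod m)) ^ j = (c : ZMod m)) :
    Complete g m :=
  stmt8_general g m hnd h
end

section
/- Let m be a non-trivial primitive number with ord_g(m) = n and an extreme cycle point with digits m·k_0, ..., m·k_{n-1} where k_i ∈ {0,1}. Let d = gcd(k_0 + g·k_1 + ... + g^{n-1}·k_{n-1}, g^n - 1). Then m = (g^n - 1)/d. Conversely, for any digits k_0,...,k_{n-1} ∈ {0,1} not all zero, setting d = gcd(k_0 + g·k_1 + ... + g^{n-1}·k_{n-1}, g^n - 1), the number m = (g^n - 1)/d is incomplete with an extreme cycle having digits m·k_0, ..., m·k_{n-1}. -/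
/-!
Telescoping `g * x (i + 1) = x i + m * k i` once around a cycle of length `n` gives
`(g ^ n - 1) * x 0 = m * S` with `S = ∑ g ^ i * k i`. For primitive `m`, a prime `p` dividing both
`m` and `x 0` is prime to `g` (as `g` is prime to `m`), so it divides every `x i` and the cycle
divided by `p` would make `m / p` incomplete. Hence `x 0` is prime to `m`, `m ∣ g ^ n - 1`, and
`gcd S (g ^ n - 1) = (g ^ n - 1) / m`.

Conversely the rotated sums `T i = ∑ j, g ^ j * k (i + j)` satisfy
`g * T (i + 1) = T i + (g ^ n - 1) * k i`; `d = gcd (T 0) (g ^ n - 1)` is prime to `g`, so it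
divides every `T i`, and `T i / d` is a cycle for `m = (g ^ n - 1) / d`.
-/

open Finset

theorem isCoprime_pow_sub_one_self {R : Type*} [CommRing R] (g : R) {n : ℕ} (hn : n ≠ 0) :
    IsCoprime (g ^ n - 1) g := by
  obtain ⟨s, rfl⟩ := Nat.exists_eq_add_one_of_ne_zero hn
  exact ⟨-1, g ^ s, by ring⟩

theorem natCast_pow_sub_one {g : ℕ} (hg : 0 < g) (n : ℕ) :
    ((g ^ n - 1 : ℕ) : ℤ) = (g : ℤ) ^ n - 1 := by
  rw [Nat.cast_pred (pow_pos hg n), Nat.cast_pow]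

theorem gcd_eq_of_mul_eq {S N t m : ℕ} {y : ℤ} (hN : m * t = N) (hS : (t : ℤ) * y = S)
    (hy : IsCoprime y m) : Nat.gcd S N = t := by
  rw [← Int.gcd_natCast_natCast, ← hS, ← hN, Nat.cast_mul, mul_comm (m : ℤ), Int.gcd_mul_left,
    Int.isCoprime_iff_gcd_eq_one.mp hy, Int.natAbs_natCast, mul_one]

section Recurrence

variable {r : ℕ}

theorem dvd_cycle_of_dvd_zero {R : Type*} [CommSemiring R] [NeZero r] {g q : R}
    {f l : ZMod r → R} (hf : ∀ i, g * f (i + 1) = f i + l i) (hqg : IsCoprime q g)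
    (hl : ∀ i, q ∣ l i) (h0 : q ∣ f 0) (i : ZMod r) : q ∣ f i := by
  have hnat : ∀ j : ℕ, q ∣ f j := by
    intro j
    induction j with
    | zero => simpa using h0
    | succ j ih =>
      rw [Nat.cast_succ]
      exact hqg.dvd_of_dvd_mul_left (hf j ▸ dvd_add ih (hl j))
  simpa using hnat i.val

theorem cycle_ediv {g q : ℤ} {f l : ZMod r → ℤ} (hf : ∀ i, g * f (i + 1) = f i + l i)
    (hfq : ∀ i, q ∣ f i) (i : ZMod r) : g * (f (i + 1) / q) = f i / q + l i / q := by
  rw [← Int.mul_ediv_assoc _ (hfq _), hf, Int.add_ediv_of_dvd_left (hfq i)]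

theorem pow_mul_cycle {R : Type*} [CommRing R] {g : R} {f l : ZMod r → R}
    (hf : ∀ i, g * f (i + 1) = f i + l i) (j : ℕ) :
    g ^ j * f j = f 0 + ∑ i ∈ range j, g ^ i * l i := by
  induction j with
  | zero => simp
  | succ j ih =>
    rw [Nat.cast_succ, pow_succ, mul_assoc, hf, sum_range_succ, mul_add, ih, add_assoc]

theorem pow_sub_one_mul_cycle_zero {R : Type*} [CommRing R] {g : R} {f l : ZMod r → R}
    (hf : ∀ i, g * f (i + 1) = f i + l i) :
    (g ^ r - 1) * f 0 = ∑ i ∈ range r, g ^ i * l i := by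
  have h := pow_mul_cycle hf r
  rw [ZMod.natCast_self] at h
  linear_combination h

/-- Up to the factor `m / (g ^ r - 1)`, the point of the extreme cycle with digits `m * k i`
at position `i`. -/
def rotatedDigitSum {R : Type*} [Semiring R] (g : R) (k : ZMod r → R) (i : ZMod r) : R :=
  ∑ j ∈ range r, g ^ j * k (i + j)

theorem rotatedDigitSum_zero {R : Type*} [Semiring R] (g : R) (k : ZMod r → R) :
    rotatedDigitSum g k 0 = ∑ j ∈ range r, g ^ j * k j := by
  simp only [rotatedDigitSum, zero_add]

theorem mul_rotatedDigitSum_succ {R : Type*} [CommRing R] [NeZero r] (g : R) (k : ZMod r → R)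
    (i : ZMod r) :
    g * rotatedDigitSum g k (i + 1) = rotatedDigitSum g k i + (g ^ r - 1) * k i := by
  obtain ⟨s, rfl⟩ : ∃ s, r = s + 1 := Nat.exists_eq_add_one.mpr (NeZero.pos r)
  set A := ∑ j ∈ range s, g ^ (j + 1) * k (i + 1 + j)
  have hwrap : i + 1 + (s : ZMod (s + 1)) = i := by
    rw [add_assoc, add_comm 1, ← Nat.cast_add_one, ZMod.natCast_self, add_zero]
  have hi : rotatedDigitSum g k i = A + k i := by
    rw [rotatedDigitSum, sum_range_succ']
    simp only [Nat.cast_add_one, Nat.cast_zero, pow_zero, one_mul, add_zero, A, add_assoc,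
      add_comm (1 : ZMod (s + 1))]
  have hsucc : g * rotatedDigitSum g k (i + 1) = A + g ^ (s + 1) * k i := by
    rw [rotatedDigitSum, mul_sum, sum_range_succ, hwrap]
    simp only [A, ← mul_assoc, ← pow_succ']
  rw [hi, hsucc]
  ring

end Recurrence

section Cycles

variable {g m r : ℕ} {x l : ZMod r → ℤ}

theorem IsCycle.dvd_digit {p : ℕ} (hc : IsCycle g m r x l) (hpm : p ∣ m) (i : ZMod r) :
    (p : ℤ) ∣ l i := by
  rcases hc.2.1 i with h | h <;> rw [h]
  · exact dvd_zero _
  · exact Int.natCast_dvd_natCast.mpr hpm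

theorem Incomplete.ne_zero (h : Incomplete g m) : m ≠ 0 := by
  obtain ⟨r, x, l, ⟨_, hl, _⟩, i, hi⟩ := h
  rintro rfl
  rcases hl i with h | h <;> simp [h] at hi

theorem IsNontrivialCycle.incomplete_div {p : ℕ} (hc : IsNontrivialCycle g m r x l)
    (hpm : p ∣ m) (hx : ∀ i, (p : ℤ) ∣ x i) : Incomplete g (m / p) := by
  obtain ⟨⟨hr, hl, hf⟩, i₀, hi₀⟩ := hc
  have hm : m ≠ 0 := Incomplete.ne_zero ⟨r, x, l, ⟨hr, hl, hf⟩, i₀, hi₀⟩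
  refine ⟨r, fun i => x i / p, fun i => l i / p, ⟨hr, fun i => ?_, cycle_ediv hf hx⟩, i₀, ?_⟩
  · rcases hl i with h | h <;> simp [h]
  · change l i₀ / p ≠ 0
    rw [(hl i₀).resolve_left hi₀, ← Int.natCast_div]
    exact_mod_cast (Nat.div_ne_zero_iff_of_dvd hpm).mpr ⟨hm, by rintro rfl; simp_all⟩

theorem isNontrivialCycle_of_digits (hr : 0 < r) (hm : m ≠ 0) {k : ZMod r → ℕ}
    (hk : ∀ i, k i = 0 ∨ k i = 1) (hk₀ : ∃ i, k i ≠ 0)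
    (hx : ∀ i, (g : ℤ) * x (i + 1) = x i + m * k i) :
    IsNontrivialCycle g m r x (fun i => m * k i) := by
  refine ⟨⟨hr, fun i => ?_, hx⟩, ?_⟩
  · rcases hk i with h | h <;> simp [h]
  · obtain ⟨i, hi⟩ := hk₀
    exact ⟨i, by simp [hm, hi]⟩

end Cycles

namespace Primitive

variable {g m r : ℕ} {x l : ZMod r → ℤ}

theorem not_forall_dvd {p : ℕ} (hm : Primitive g m) (hc : IsNontrivialCycle g m r x l)
    (hp : 1 < p) (hpm : p ∣ m) : ¬ ∀ i, (p : ℤ) ∣ x i := fun hx =>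
  hm.2 (m / p) (Nat.div_dvd_of_dvd hpm)
    (Nat.div_lt_self (Nat.pos_of_ne_zero hm.1.ne_zero) hp).ne (hc.incomplete_div hpm hx)

theorem coprime (hm : Primitive g m) : Nat.Coprime g m := by
  obtain ⟨r, x, l, hc⟩ := hm.1
  by_contra h
  obtain ⟨p, hp, hpd⟩ := Nat.exists_prime_and_dvd h
  have hpm : p ∣ m := hpd.trans (Nat.gcd_dvd_right _ _)
  have hpg : (p : ℤ) ∣ g := Int.natCast_dvd_natCast.mpr (hpd.trans (Nat.gcd_dvd_left _ _))
  refine hm.not_forall_dvd hc hp.one_lt hpm fun i => ?_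
  have hx : x i = g * x (i + 1) - l i := by linarith [hc.1.2.2 i]
  rw [hx]
  exact dvd_sub (dvd_mul_of_dvd_left hpg _) (hc.1.dvd_digit hpm i)

theorem isCoprime_cycle_zero (hm : Primitive g m) (hc : IsNontrivialCycle g m r x l) :
    IsCoprime (x 0) (m : ℤ) := by
  have : NeZero r := ⟨hc.1.1.ne'⟩
  rw [Int.isCoprime_iff_gcd_eq_one]
  by_contra h
  obtain ⟨p, hp, hpd⟩ := Nat.exists_prime_and_dvd h
  have hpd' := Int.natCast_dvd_natCast.mpr hpd
  have hpm : p ∣ m := Int.natCast_dvd_natCast.mp (hpd'.trans (Int.gcd_dvd_right _ _))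
  have hpg : IsCoprime (p : ℤ) g :=
    Nat.isCoprime_iff_coprime.mpr (hm.coprime.symm.coprime_dvd_left hpm)
  exact hm.not_forall_dvd hc hp.one_lt hpm
    (dvd_cycle_of_dvd_zero hc.1.2.2 hpg (hc.1.dvd_digit hpm) (hpd'.trans (Int.gcd_dvd_left _ _)))

end Primitive

theorem Primitive.eq_pow_sub_one_div_gcd {g m n : ℕ} (hg : 1 < g) (hm : Primitive g m)
    (hn : 0 < n) {k : ZMod n → ℕ} (hk : ∀ i, k i = 0 ∨ k i = 1) (hk₀ : ∃ i, k i ≠ 0)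
    {x : ZMod n → ℤ} (hx : ∀ i, (g : ℤ) * x (i + 1) = x i + m * k i) :
    m = (g ^ n - 1) / Nat.gcd (∑ i ∈ range n, g ^ i * k i) (g ^ n - 1) := by
  have hm₀ : m ≠ 0 := hm.1.ne_zero
  have hcop := hm.isCoprime_cycle_zero (isNontrivialCycle_of_digits hn hm₀ hk hk₀ hx)
  have hsum : ((g ^ n - 1 : ℕ) : ℤ) * x 0 = m * (∑ i ∈ range n, g ^ i * k i : ℕ) := by
    rw [natCast_pow_sub_one (by omega), pow_sub_one_mul_cycle_zero hx]
    push_cast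
    simp only [mul_sum, mul_left_comm]
  obtain ⟨t, ht⟩ : m ∣ g ^ n - 1 :=
    Int.natCast_dvd_natCast.mp (hcop.symm.dvd_of_dvd_mul_right ⟨_, hsum⟩)
  have htx : (t : ℤ) * x 0 = (∑ i ∈ range n, g ^ i * k i : ℕ) :=
    mul_left_cancel₀ (Nat.cast_ne_zero.mpr hm₀) (by rw [← mul_assoc, ← Nat.cast_mul, ← ht, hsum])
  have ht₀ : t ≠ 0 := by
    rintro rfl
    exact (Nat.one_lt_pow hn.ne' hg).not_ge (Nat.sub_eq_zero_iff_le.mp (ht.trans (mul_zero m)))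
  rw [gcd_eq_of_mul_eq ht.symm htx hcop, ht, Nat.mul_div_cancel _ (Nat.pos_of_ne_zero ht₀)]

theorem exists_cycle_pow_sub_one_div_gcd {g n : ℕ} (hg : 1 < g) (hn : 0 < n) (k : ZMod n → ℕ) :
    ∃ x : ZMod n → ℤ, ∀ i, (g : ℤ) * x (i + 1) =
      x i + ((g ^ n - 1) / Nat.gcd (∑ i ∈ range n, g ^ i * k i) (g ^ n - 1) : ℕ) * k i := by
  have : NeZero n := ⟨hn.ne'⟩
  set d := Nat.gcd (∑ i ∈ range n, g ^ i * k i) (g ^ n - 1)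
  have hT := mul_rotatedDigitSum_succ (g : ℤ) (fun i => (k i : ℤ))
  set T := rotatedDigitSum (g : ℤ) (fun i => (k i : ℤ)) with hT_def
  have hdm : (d : ℤ) * ((g ^ n - 1) / d : ℕ) = (g : ℤ) ^ n - 1 := by
    rw [← natCast_pow_sub_one (by omega), ← Nat.cast_mul,
      Nat.mul_div_cancel' (Nat.gcd_dvd_right _ _)]
  have hd₀ : (d : ℤ) ≠ 0 := Nat.cast_ne_zero.mpr
    (Nat.gcd_pos_of_pos_right _ (Nat.sub_pos_of_lt (Nat.one_lt_pow hn.ne' hg))).ne'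
  have hdT₀ : (d : ℤ) ∣ T 0 := by
    rw [hT_def, rotatedDigitSum_zero]
    exact_mod_cast Nat.gcd_dvd_left _ _
  have hdg : IsCoprime (d : ℤ) g :=
    (isCoprime_pow_sub_one_self (g : ℤ) hn.ne').of_isCoprime_of_dvd_left (hdm ▸ dvd_mul_right _ _)
  have hdT := dvd_cycle_of_dvd_zero hT hdg
    (fun i => hdm ▸ dvd_mul_of_dvd_left (dvd_mul_right _ _) _) hdT₀
  refine ⟨fun i => T i / d, fun i => ?_⟩
  rw [cycle_ediv hT hdT i, ← hdm, mul_assoc, Int.mul_ediv_cancel_left _ hd₀]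

theorem stmt17_general (g : ℕ) (hg4 : 4 ≤ g) :
    (∀ (m : ℕ), Odd m → Primitive g m → m ≠ g - 1 →
      ∀ (n : ℕ), n = orderOf ((g : ZMod m)) →
      ∀ (k : ZMod n → ℕ), (∀ i, k i = 0 ∨ k i = 1) → (∃ i, k i ≠ 0) →
      ∀ (x : ZMod n → ℤ), (∀ i, (g : ℤ) * x (i + 1) = x i + (m : ℤ) * (k i : ℤ)) →
      ∀ (d : ℕ), d = Nat.gcd (∑ i ∈ Finset.range n, g ^ i * k (i : ZMod n)) (g ^ n - 1) →
      m = (g ^ n - 1) / d) ∧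
    (∀ (n : ℕ), 0 < n →
      ∀ (k : ZMod n → ℕ), (∀ i, k i = 0 ∨ k i = 1) → (∃ i, k i ≠ 0) →
      ∀ (d m : ℕ), d = Nat.gcd (∑ i ∈ Finset.range n, g ^ i * k (i : ZMod n)) (g ^ n - 1) →
      m = (g ^ n - 1) / d →
      Incomplete g m ∧
        ∃ x : ZMod n → ℤ, ∀ i, (g : ℤ) * x (i + 1) = x i + (m : ℤ) * (k i : ℤ)) := by
  have hg : 1 < g := by omega
  refine ⟨fun m _ hm _ n hn k hk hk₀ x hx d hd => ?_, fun n hn k hk hk₀ d m hd hm => ?_⟩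
  · have : NeZero m := ⟨hm.1.ne_zero⟩
    have hn₀ : 0 < n :=
      hn ▸ ((ZMod.isUnit_iff_coprime g m).mpr hm.coprime).isOfFinOrder.orderOf_pos
    exact hd ▸ hm.eq_pow_sub_one_div_gcd hg hn₀ hk hk₀ hx
  · have hN : 0 < g ^ n - 1 := Nat.sub_pos_of_lt (Nat.one_lt_pow hn.ne' hg)
    have hm₀ : m ≠ 0 := (hm ▸ Nat.div_pos (Nat.le_of_dvd hN (hd ▸ Nat.gcd_dvd_right _ _))
      (hd ▸ Nat.gcd_pos_of_pos_right _ hN)).ne'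
    obtain ⟨x, hx⟩ := exists_cycle_pow_sub_one_div_gcd hg hn k
    rw [← hd, ← hm] at hx
    exact ⟨⟨n, x, _, isNontrivialCycle_of_digits hn hm₀ hk hk₀ hx⟩, x, hx⟩

theorem stmt17 (g : ℕ) (hg4 : 4 ≤ g) (hge : Even g) :
    (∀ (m : ℕ), Odd m → Primitive g m → m ≠ g - 1 →
      ∀ (n : ℕ), n = orderOf ((g : ZMod m)) →
      ∀ (k : ZMod n → ℕ), (∀ i, k i = 0 ∨ k i = 1) → (∃ i, k i ≠ 0) →
      ∀ (x : ZMod n → ℤ), (∀ i, (g : ℤ) * x (i + 1) = x i + (m : ℤ) * (k i : ℤ)) →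
      ∀ (d : ℕ), d = Nat.gcd (∑ i ∈ Finset.range n, g ^ i * k (i : ZMod n)) (g ^ n - 1) →
      m = (g ^ n - 1) / d) ∧
    (∀ (n : ℕ), 0 < n →
      ∀ (k : ZMod n → ℕ), (∀ i, k i = 0 ∨ k i = 1) → (∃ i, k i ≠ 0) →
      ∀ (d m : ℕ), d = Nat.gcd (∑ i ∈ Finset.range n, g ^ i * k (i : ZMod n)) (g ^ n - 1) →
      m = (g ^ n - 1) / d →
      Incomplete g m ∧
        ∃ x : ZMod n → ℤ, ∀ i, (g : ℤ) * x (i + 1) = x i + (m : ℤ) * (k i : ℤ)) :=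
  stmt17_general g hg4
end
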